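/- Let I be a One-In-Three Positive 3-SAT instance with variables x₁,…,x_n and clauses C₁,…,C_m, each clause containing exactly three positive literals. Construct the HRRC instance I' as follows. For each variable x_i: a resident y'_i with preference list (x'_i) and a hospital x'_i of capacity 1 with preference list (y'_i). For each clause C_j: residents g'_{j,1} with list (g'_{j,2}, g'_{j,4}) and g'_{j,3} with list (g'_{j,4}, g'_{j,2}); hospitals of capacity 1, g'_{j,2} with list (g'_{j,3}, g'_{j,1}) and g'_{j,4} with list (g'_{j,1}, g'_{j,3}). For each clause C_j = {x_{i_{j,1}} ∨ x_{i_{j,2}} ∨ x_{i_{j,3}}}, every 2-element subset E of {g'_{j,2}, g'_{j,4}, x'_{i_{j,1}}, x'_{i_{j,2}}, x'_{i_{j,3}}} is a region with regional cap c(E) = 1. Then I' admits a strongly stable matching if and only if I has a truth assignment under which every clause contains exactly one true literal. -/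

import Mathlib

/-- `a` is strictly preferred to `b` in the strictly ordered preference list `l`
(most preferred first). -/
def ListPref {α : Type*} [DecidableEq α] (l : List α) (a b : α) : Prop :=
  b ∈ l ∧ l.idxOf a < l.idxOf b

/-- An instance of the Hospitals/Residents problem with Regional Caps (HRRC):
residents `R`, hospitals `H`, strict preference lists on both sides,
hospital capacities `q`, a family `regions` of regions with regional caps `cap`. -/
structure HRRC (R H : Type*) where
  prefR : R → List H
  prefH : H → List R
  q : H → ℕ
  regions : Set (Finset H)
  cap : Finset H → ℕ

namespace HRRC

variable {R H : Type*} [DecidableEq R] [DecidableEq H]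

/-- Well-formedness: preference lists are strict (no repetitions), acceptability is
mutual, and regions are nonempty. -/
def WellFormed (I : HRRC R H) : Prop :=
  (∀ r, (I.prefR r).Nodup) ∧ (∀ h, (I.prefH h).Nodup) ∧
  (∀ r h, h ∈ I.prefR r ↔ r ∈ I.prefH h) ∧
  (∀ E ∈ I.regions, E.Nonempty)

/-- `M(h)`: the set of residents assigned to hospital `h`. -/
def assignedTo (M : Finset (R × H)) (h : H) : Finset R :=
  (M.filter fun p => p.2 = h).image Prod.fst

/-- `M(E)`: the set of residents assigned to some hospital in the region `E`. -/
def assignedIn (M : Finset (R × H)) (E : Finset H) : Finset R :=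
  (M.filter fun p => p.2 ∈ E).image Prod.fst

/-- `M` is a matching: pairs are mutually acceptable, each resident has at most one
hospital, and no hospital exceeds its capacity. -/
def IsMatching (I : HRRC R H) (M : Finset (R × H)) : Prop :=
  (∀ p ∈ M, p.2 ∈ I.prefR p.1 ∧ p.1 ∈ I.prefH p.2) ∧
  (∀ r h h', (r, h) ∈ M → (r, h') ∈ M → h = h') ∧
  (∀ h, (assignedTo M h).card ≤ I.q h)

/-- Feasibility: all regional caps are respected. -/
def FeasibleCaps (I : HRRC R H) (M : Finset (R × H)) : Prop :=
  ∀ E ∈ I.regions, (assignedIn M E).card ≤ I.cap E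

/-- `M \ {(r, M(r))} ∪ {(r, h)}`. -/
def move (M : Finset (R × H)) (r : R) (h : H) : Finset (R × H) :=
  (M.filter fun p => p.1 ≠ r) ∪ {(r, h)}

/-- `(r, h)` is a blocking pair for `M`. -/
def IsBlockingPair (I : HRRC R H) (M : Finset (R × H)) (r : R) (h : H) : Prop :=
  (r, h) ∉ M ∧ (h ∈ I.prefR r ∧ r ∈ I.prefH h) ∧
  ((∀ h', (r, h') ∉ M) ∨ ∃ h', (r, h') ∈ M ∧ ListPref (I.prefR r) h h') ∧
  ((assignedTo M h).card < I.q h ∨ ∃ r' ∈ assignedTo M h, ListPref (I.prefH h) r r')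

/-- `(r, h)` is a strong blocking pair for `M`. -/
def IsSBP (I : HRRC R H) (M : Finset (R × H)) (r : R) (h : H) : Prop :=
  I.IsBlockingPair M r h ∧
  (I.FeasibleCaps (move M r h) ∨ ∃ r' ∈ assignedTo M h, ListPref (I.prefH h) r r')

/-- `M` is a strongly stable matching of `I`. -/
def IsStronglyStable (I : HRRC R H) (M : Finset (R × H)) : Prop :=
  I.IsMatching M ∧ I.FeasibleCaps M ∧ ∀ r h, ¬ I.IsSBP M r h

end HRRC

/-- Residents of the instance `I'`: for each variable `xᵢ` a resident `y'ᵢ`, and for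
each clause `Cⱼ` residents `g'_{j,1}` and `g'_{j,3}`. -/
inductive Res10 (n m : ℕ) where
  | y (i : Fin n)
  | g1 (j : Fin m)
  | g3 (j : Fin m)
deriving DecidableEq

/-- Hospitals of the instance `I'`: for each variable `xᵢ` a hospital `x'ᵢ`, and for
each clause `Cⱼ` hospitals `g'_{j,2}` and `g'_{j,4}`. -/
inductive Hos10 (n m : ℕ) where
  | x (i : Fin n)
  | g2 (j : Fin m)
  | g4 (j : Fin m)
deriving DecidableEq

/-- The HRRC instance `I'` built from a One-In-Three Positive 3-SAT instance with
variables `x₀, …, x_{n-1}` and clauses `C₀, …, C_{m-1}`, where the `ℓ`-th (positive)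
literal of clause `Cⱼ` is the variable `x_{C j ℓ}`.  All hospitals have capacity 1.
Preference lists: `y'ᵢ: (x'ᵢ)`; `g'_{j,1}: (g'_{j,2}, g'_{j,4})`;
`g'_{j,3}: (g'_{j,4}, g'_{j,2})`; `x'ᵢ: (y'ᵢ)`; `g'_{j,2}: (g'_{j,3}, g'_{j,1})`;
`g'_{j,4}: (g'_{j,1}, g'_{j,3})`.  For each clause `Cⱼ`, every 2-element subset of
`{g'_{j,2}, g'_{j,4}, x'_{C j 0}, x'_{C j 1}, x'_{C j 2}}` is a region with
regional cap 1. -/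
def oneInThreeInstance {n m : ℕ} (C : Fin m → Fin 3 → Fin n) :
    HRRC (Res10 n m) (Hos10 n m) where
  prefR := fun r => match r with
    | .y i => [.x i]
    | .g1 j => [.g2 j, .g4 j]
    | .g3 j => [.g4 j, .g2 j]
  prefH := fun h => match h with
    | .x i => [.y i]
    | .g2 j => [.g3 j, .g1 j]
    | .g4 j => [.g1 j, .g3 j]
  q := fun _ => 1
  regions := { E | ∃ j : Fin m,
    E ⊆ {Hos10.g2 j, Hos10.g4 j, Hos10.x (C j 0), Hos10.x (C j 1), Hos10.x (C j 2)} ∧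
    E.card = 2 }
  cap := fun _ => 1

/-! In a strongly stable matching the gadget `g'_{j,1}, …, g'_{j,4}` of every clause is empty:
a resident placed there could move to a free hospital it prefers without breaking a cap, or be
displaced by a resident the hospital prefers. Then `(g'_{j,1}, g'_{j,2})` is a blocking pair, and
it can fail to be strong only because some `x'` of the clause is occupied; the pairwise caps allow
at most one. Hence "`y'ᵢ` is matched" is a one-in-three assignment. Conversely, matching `y'ᵢ` to
`x'ᵢ` for the true variables, every candidate blocking pair shares a cap-1 region with the unique
true literal of some clause. -/

theorem listPref_pair {α : Type*} [DecidableEq α] {a b : α} (hab : a ≠ b) :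
    ListPref [a, b] a b := by
  simp [ListPref, hab]

namespace HRRC

variable {R H : Type*} [DecidableEq R] [DecidableEq H] {I : HRRC R H} {M : Finset (R × H)}
  {r r' : R} {h h' : H} {E : Finset H}

theorem mem_assignedTo : r ∈ assignedTo M h ↔ (r, h) ∈ M := by
  simp [assignedTo]

theorem mem_assignedIn : r ∈ assignedIn M E ↔ ∃ h ∈ E, (r, h) ∈ M := by
  simp [assignedIn, and_comm]

theorem mem_move : (r', h') ∈ move M r h ↔ ((r', h') ∈ M ∧ r' ≠ r) ∨ (r' = r ∧ h' = h) := by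
  simp [move, or_comm]

theorem card_assignedTo_lt_one : (assignedTo M h).card < 1 ↔ ∀ r, (r, h) ∉ M := by
  simp [Finset.eq_empty_iff_forall_notMem, mem_assignedTo]

theorem card_assignedIn_le_one :
    (assignedIn M E).card ≤ 1 ↔
      ∀ r r' h h', h ∈ E → h' ∈ E → (r, h) ∈ M → (r', h') ∈ M → r = r' := by
  simp only [Finset.card_le_one, mem_assignedIn]
  constructor
  · intro H r r' h h' hh hh' hr hr'
    exact H r ⟨h, hh, hr⟩ r' ⟨h', hh', hr'⟩
  · rintro H r ⟨h, hh, hr⟩ r' ⟨h', hh', hr'⟩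
    exact H r r' h h' hh hh' hr hr'

theorem IsMatching.eq_of_mem (hM : I.IsMatching M) (hq : I.q h ≤ 1) (hr : (r, h) ∈ M)
    (hr' : (r', h) ∈ M) : r = r' :=
  Finset.card_le_one.mp ((hM.2.2 h).trans hq) r (mem_assignedTo.mpr hr) r'
    (mem_assignedTo.mpr hr')

theorem feasibleCaps_iff (hcap : ∀ E ∈ I.regions, I.cap E = 1) :
    I.FeasibleCaps M ↔ ∀ E ∈ I.regions,
      ∀ r r' h h', h ∈ E → h' ∈ E → (r, h) ∈ M → (r', h') ∈ M → r = r' :=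
  forall₂_congr fun E hE => by rw [hcap E hE, card_assignedIn_le_one]

theorem FeasibleCaps.feasibleCaps_move_iff (hcap : ∀ E ∈ I.regions, I.cap E = 1)
    (hF : I.FeasibleCaps M) :
    I.FeasibleCaps (move M r h) ↔
      ∀ E ∈ I.regions, h ∈ E → ∀ r' h', h' ∈ E → (r', h') ∈ M → r' = r := by
  rw [feasibleCaps_iff hcap] at hF ⊢
  constructor
  · intro H E hE hh r' h' hh' hr'
    by_contra hne
    exact hne (H E hE r' r h' h hh' hh (mem_move.mpr (Or.inl ⟨hr', hne⟩))
      (mem_move.mpr (Or.inr ⟨rfl, rfl⟩)))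
  · intro H E hE r₁ r₂ h₁ h₂ hh₁ hh₂ hr₁ hr₂
    rcases mem_move.mp hr₁ with ⟨hm₁, -⟩ | ⟨rfl, rfl⟩ <;>
      rcases mem_move.mp hr₂ with ⟨hm₂, -⟩ | ⟨rfl, rfl⟩
    · exact hF E hE r₁ r₂ h₁ h₂ hh₁ hh₂ hm₁ hm₂
    · exact H E hE hh₂ r₁ h₁ hh₁ hm₁
    · exact (H E hE hh₁ r₂ h₂ hh₂ hm₂).symm
    · rfl

end HRRC

namespace OneInThree

open HRRC Hos10 Res10

variable {n m : ℕ} {C : Fin m → Fin 3 → Fin n}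

def clauseHospitals (C : Fin m → Fin 3 → Fin n) (j : Fin m) : Finset (Hos10 n m) :=
  {g2 j, g4 j, x (C j 0), x (C j 1), x (C j 2)}

theorem cap_eq_one :
    ∀ E ∈ (oneInThreeInstance C).regions, (oneInThreeInstance C).cap E = 1 :=
  fun _ _ => rfl

theorem mem_clauseHospitals {j : Fin m} {h : Hos10 n m} :
    h ∈ clauseHospitals C j ↔ h = g2 j ∨ h = g4 j ∨ ∃ ℓ, h = x (C j ℓ) := by
  simp [clauseHospitals, Fin.exists_fin_succ]

theorem x_mem_clauseHospitals {i : Fin n} {j : Fin m} :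
    x i ∈ clauseHospitals C j ↔ ∃ ℓ, C j ℓ = i := by
  simp [mem_clauseHospitals, eq_comm]

theorem g2_mem_clauseHospitals {j j' : Fin m} :
    g2 j ∈ clauseHospitals C j' ↔ j' = j := by
  simp [mem_clauseHospitals, eq_comm]

theorem g4_mem_clauseHospitals {j j' : Fin m} :
    g4 j ∈ clauseHospitals C j' ↔ j' = j := by
  simp [mem_clauseHospitals, eq_comm]

theorem pair_mem_regions {j : Fin m} {h h' : Hos10 n m} (hh : h ∈ clauseHospitals C j)
    (hh' : h' ∈ clauseHospitals C j) (hne : h ≠ h') :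
    {h, h'} ∈ (oneInThreeInstance C).regions :=
  ⟨j, Finset.insert_subset hh (Finset.singleton_subset_iff.mpr hh'), Finset.card_pair hne⟩

section Forward

variable {M : Finset (Res10 n m × Hos10 n m)}

theorem eq_of_mem_clauseHospitals (hM : (oneInThreeInstance C).IsMatching M)
    (hF : (oneInThreeInstance C).FeasibleCaps M) {j : Fin m} {r r' : Res10 n m}
    {h h' : Hos10 n m} (hh : h ∈ clauseHospitals C j) (hh' : h' ∈ clauseHospitals C j)
    (hr : (r, h) ∈ M) (hr' : (r', h') ∈ M) : r = r' ∧ h = h' := by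
  obtain rfl : r = r' := by
    by_cases hne : h = h'
    · subst hne
      exact hM.eq_of_mem le_rfl hr hr'
    · exact (feasibleCaps_iff cap_eq_one).mp hF _ (pair_mem_regions hh hh' hne) r r' h h'
        (by simp) (by simp) hr hr'
  exact ⟨rfl, hM.2.1 r h h' hr hr'⟩

theorem feasibleCaps_move (hM : (oneInThreeInstance C).IsMatching M)
    (hF : (oneInThreeInstance C).FeasibleCaps M) {j : Fin m} {r : Res10 n m}
    {h₀ h : Hos10 n m} (hr : (r, h₀) ∈ M) (hh₀ : h₀ ∈ clauseHospitals C j)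
    (hh : ∀ j', h ∈ clauseHospitals C j' → j' = j) :
    (oneInThreeInstance C).FeasibleCaps (move M r h) := by
  refine (hF.feasibleCaps_move_iff cap_eq_one).mpr ?_
  rintro E ⟨j', hE, -⟩ hhE r' h' hh'E hr'
  obtain rfl := hh j' (hE hhE)
  exact (eq_of_mem_clauseHospitals hM hF (hE hh'E) hh₀ hr' hr).1

theorem gadget_unassigned (hS : (oneInThreeInstance C).IsStronglyStable M) {j : Fin m}
    {a b : Res10 n m} {u v : Hos10 n m}
    (hb : (oneInThreeInstance C).prefR b = [v, u]) (hu : (oneInThreeInstance C).prefH u = [b, a])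
    (hv : b ∈ (oneInThreeInstance C).prefH v) (hab : a ≠ b) (huv : u ≠ v)
    (huj : u ∈ clauseHospitals C j) (hvj : ∀ j', v ∈ clauseHospitals C j' ↔ j' = j)
    (r : Res10 n m) : (r, u) ∉ M := by
  obtain ⟨hM, hF, hns⟩ := hS
  intro hr
  have hv_free : ∀ r', (r', v) ∉ M := fun r' hr' =>
    huv (eq_of_mem_clauseHospitals hM hF huj ((hvj j).mpr rfl) hr hr').2
  have hr_acc : r ∈ [b, a] := hu ▸ (hM.1 _ hr).2
  rcases List.mem_pair.mp hr_acc with rfl | rfl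
  · -- `r = b` holds `u` but prefers the free hospital `v`
    exact hns r v ⟨⟨fun hrv => huv (hM.2.1 _ _ _ hr hrv), ⟨by simp [hb], hv⟩,
      Or.inr ⟨u, hr, hb ▸ listPref_pair huv.symm⟩, Or.inl (card_assignedTo_lt_one.mpr hv_free)⟩,
      Or.inl (feasibleCaps_move hM hF hr huj fun j' => (hvj j').mp)⟩
  · -- `u` holds `r = a` but prefers `b`, who is then unmatched
    have hb_free : ∀ h', (b, h') ∉ M := by
      intro h' hbh'
      have hh'_acc : h' ∈ [v, u] := hb ▸ (hM.1 _ hbh').1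
      rcases List.mem_pair.mp hh'_acc with rfl | rfl
      · exact hv_free b hbh'
      · exact hab (hM.eq_of_mem le_rfl hr hbh')
    have hpref : ∃ r' ∈ assignedTo M u, ListPref ((oneInThreeInstance C).prefH u) b r' :=
      ⟨r, mem_assignedTo.mpr hr, hu ▸ listPref_pair hab.symm⟩
    exact hns b u ⟨⟨hb_free u, ⟨by simp [hb], by simp [hu]⟩, Or.inl hb_free, Or.inr hpref⟩,
      Or.inr hpref⟩

theorem gadget_hospitals_unassigned (hS : (oneInThreeInstance C).IsStronglyStable M)
    (j : Fin m) (r : Res10 n m) : (r, g2 j) ∉ M ∧ (r, g4 j) ∉ M :=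
  ⟨gadget_unassigned hS (a := g1 j) (b := g3 j) (v := g4 j) rfl rfl
      (by simp [oneInThreeInstance]) (by simp) (by simp) (by simp [clauseHospitals])
      (fun _ => g4_mem_clauseHospitals) r,
    gadget_unassigned hS (a := g3 j) (b := g1 j) (v := g2 j) rfl rfl
      (by simp [oneInThreeInstance]) (by simp) (by simp) (by simp [clauseHospitals])
      (fun _ => g2_mem_clauseHospitals) r⟩

theorem exists_matched_literal (hS : (oneInThreeInstance C).IsStronglyStable M) (j : Fin m) :
    ∃ ℓ, (y (C j ℓ), x (C j ℓ)) ∈ M := by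
  have hM := hS.1
  have hfree := gadget_hospitals_unassigned hS j
  have hg1 : ∀ h, (g1 j, h) ∉ M := by
    intro h hh
    have hh_acc : h ∈ [g2 j, g4 j] := (hM.1 _ hh).1
    rcases List.mem_pair.mp hh_acc with rfl | rfl
    exacts [(hfree _).1 hh, (hfree _).2 hh]
  have hblock : (oneInThreeInstance C).IsBlockingPair M (g1 j) (g2 j) :=
    ⟨hg1 _, ⟨by simp [oneInThreeInstance], by simp [oneInThreeInstance]⟩, Or.inl hg1,
      Or.inl (card_assignedTo_lt_one.mpr fun r => (hfree r).1)⟩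
  have hinfeas : ¬ (oneInThreeInstance C).FeasibleCaps (move M (g1 j) (g2 j)) :=
    fun hmove => hS.2.2 _ _ ⟨hblock, Or.inl hmove⟩
  rw [hS.2.1.feasibleCaps_move_iff cap_eq_one] at hinfeas
  push Not at hinfeas
  obtain ⟨E, ⟨j', hE, -⟩, hg2E, r, h, hhE, hr, -⟩ := hinfeas
  obtain rfl := g2_mem_clauseHospitals.mp (hE hg2E)
  rcases mem_clauseHospitals.mp (hE hhE) with rfl | rfl | ⟨ℓ, rfl⟩
  · exact absurd hr (hfree r).1
  · exact absurd hr (hfree r).2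
  · obtain rfl : r = y (C j' ℓ) := by simpa [oneInThreeInstance] using (hM.1 _ hr).2
    exact ⟨ℓ, hr⟩

theorem existsUnique_matched_literal (hS : (oneInThreeInstance C).IsStronglyStable M)
    {j : Fin m} (hC : Function.Injective (C j)) :
    ∃! ℓ, (y (C j ℓ), x (C j ℓ)) ∈ M := by
  obtain ⟨ℓ, hℓ⟩ := exists_matched_literal hS j
  refine ⟨ℓ, hℓ, fun ℓ' hℓ' => hC ?_⟩
  have hx := (eq_of_mem_clauseHospitals hS.1 hS.2.1 (x_mem_clauseHospitals.mpr ⟨ℓ', rfl⟩)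
    (x_mem_clauseHospitals.mpr ⟨ℓ, rfl⟩) hℓ' hℓ).2
  simpa using hx

end Forward

section Backward

variable {a : Fin n → Bool}

/-- Variables occurring in no clause are matched as well: otherwise `(y'ᵢ, x'ᵢ)` would be a
strong blocking pair. -/
def assignmentMatching (C : Fin m → Fin 3 → Fin n) (a : Fin n → Bool) :
    Finset (Res10 n m × Hos10 n m) :=
  (Finset.univ.filter fun i => a i = true ∨ ∀ j ℓ, C j ℓ ≠ i).image fun i => (y i, x i)

theorem mem_assignmentMatching {r : Res10 n m} {h : Hos10 n m} :
    (r, h) ∈ assignmentMatching C a ↔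
      ∃ i, (a i = true ∨ ∀ j ℓ, C j ℓ ≠ i) ∧ r = y i ∧ h = x i := by
  simp only [assignmentMatching, Finset.mem_image, Finset.mem_filter, Finset.mem_univ,
    true_and, Prod.mk.injEq]
  simp only [@eq_comm _ r, @eq_comm _ h]

theorem isMatching_assignmentMatching :
    (oneInThreeInstance C).IsMatching (assignmentMatching C a) := by
  refine ⟨?_, ?_, fun h => Finset.card_le_one.mpr ?_⟩
  · rintro ⟨r, h⟩ hrh
    obtain ⟨i, -, rfl, rfl⟩ := mem_assignmentMatching.mp hrh
    simp [oneInThreeInstance]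
  · intro r h h' hrh hrh'
    obtain ⟨i, -, rfl, rfl⟩ := mem_assignmentMatching.mp hrh
    obtain ⟨i', -, hi, rfl⟩ := mem_assignmentMatching.mp hrh'
    simp_all
  · intro r hr r' hr'
    obtain ⟨i, -, rfl, rfl⟩ := mem_assignmentMatching.mp (mem_assignedTo.mp hr)
    obtain ⟨i', -, rfl, hi⟩ := mem_assignmentMatching.mp (mem_assignedTo.mp hr')
    simp_all

theorem feasibleCaps_assignmentMatching (ha : ∀ j : Fin m, ∃! ℓ : Fin 3, a (C j ℓ) = true) :
    (oneInThreeInstance C).FeasibleCaps (assignmentMatching C a) := by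
  refine (feasibleCaps_iff cap_eq_one).mpr ?_
  rintro E ⟨j, hE, -⟩ r r' h h' hh hh' hr hr'
  obtain ⟨i, hi, rfl, rfl⟩ := mem_assignmentMatching.mp hr
  obtain ⟨i', hi', rfl, rfl⟩ := mem_assignmentMatching.mp hr'
  obtain ⟨ℓ, rfl⟩ := x_mem_clauseHospitals.mp (hE hh)
  obtain ⟨ℓ', rfl⟩ := x_mem_clauseHospitals.mp (hE hh')
  have hℓ : a (C j ℓ) = true := hi.resolve_right fun hno => hno j ℓ rfl
  have hℓ' : a (C j ℓ') = true := hi'.resolve_right fun hno => hno j ℓ' rfl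
  rw [(ha j).unique hℓ hℓ']

theorem isolated_of_notMem_assignmentMatching {r : Res10 n m} {h : Hos10 n m}
    (hnm : (r, h) ∉ assignmentMatching C a) (hR : h ∈ (oneInThreeInstance C).prefR r)
    (hH : r ∈ (oneInThreeInstance C).prefH h) :
    (∀ h', (r, h') ∉ assignmentMatching C a) ∧ ∀ r', (r', h) ∉ assignmentMatching C a := by
  constructor
  · intro h' hrh'
    obtain ⟨i, -, rfl, rfl⟩ := mem_assignmentMatching.mp hrh'
    obtain rfl : h = x i := by simpa [oneInThreeInstance] using hR
    exact hnm hrh'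
  · intro r' hr'h
    obtain ⟨i, -, rfl, rfl⟩ := mem_assignmentMatching.mp hr'h
    obtain rfl : r = y i := by simpa [oneInThreeInstance] using hH
    exact hnm hr'h

theorem exists_clauseHospitals_of_notMem_assignmentMatching {r : Res10 n m} {h : Hos10 n m}
    (hnm : (r, h) ∉ assignmentMatching C a) (hH : r ∈ (oneInThreeInstance C).prefH h) :
    ∃ j, h ∈ clauseHospitals C j := by
  cases h with
  | x i =>
    by_contra hno
    obtain rfl : r = y i := by simpa [oneInThreeInstance] using hH
    refine hnm (mem_assignmentMatching.mpr ⟨i, Or.inr fun j ℓ hji => hno ?_, rfl, rfl⟩)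
    exact ⟨j, x_mem_clauseHospitals.mpr ⟨ℓ, hji⟩⟩
  | g2 j => exact ⟨j, g2_mem_clauseHospitals.mpr rfl⟩
  | g4 j => exact ⟨j, g4_mem_clauseHospitals.mpr rfl⟩

theorem not_isSBP_assignmentMatching (ha : ∀ j : Fin m, ∃! ℓ : Fin 3, a (C j ℓ) = true)
    (r : Res10 n m) (h : Hos10 n m) :
    ¬ (oneInThreeInstance C).IsSBP (assignmentMatching C a) r h := by
  rintro ⟨⟨hnm, ⟨hR, hH⟩, -, -⟩, hstrong⟩
  obtain ⟨hr_free, hh_free⟩ := isolated_of_notMem_assignmentMatching hnm hR hH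
  rcases hstrong with hmove | ⟨r', hr', -⟩
  swap
  · exact hh_free r' (mem_assignedTo.mp hr')
  obtain ⟨j, hj⟩ := exists_clauseHospitals_of_notMem_assignmentMatching hnm hH
  obtain ⟨ℓ, hℓ, -⟩ := ha j
  have hmatched : (y (C j ℓ), x (C j ℓ)) ∈ assignmentMatching C a :=
    mem_assignmentMatching.mpr ⟨_, Or.inl hℓ, rfl, rfl⟩
  have hne : h ≠ x (C j ℓ) := fun e => hh_free _ (e ▸ hmatched)
  -- `r` would join `y'_{C j ℓ}` in the region `{h, x'_{C j ℓ}}`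
  have hr_eq := ((feasibleCaps_assignmentMatching ha).feasibleCaps_move_iff cap_eq_one).mp hmove
    _ (pair_mem_regions hj (x_mem_clauseHospitals.mpr ⟨ℓ, rfl⟩) hne) (by simp) _ _ (by simp)
    hmatched
  exact hr_free _ (hr_eq ▸ hmatched)

theorem isStronglyStable_assignmentMatching
    (ha : ∀ j : Fin m, ∃! ℓ : Fin 3, a (C j ℓ) = true) :
    (oneInThreeInstance C).IsStronglyStable (assignmentMatching C a) :=
  ⟨isMatching_assignmentMatching, feasibleCaps_assignmentMatching ha,
    not_isSBP_assignmentMatching ha⟩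

end Backward

end OneInThree

/-- `I'` admits a strongly stable matching iff the One-In-Three Positive 3-SAT
instance has a truth assignment making exactly one literal true in each clause. -/
theorem oneInThree_reduction_correct {n m : ℕ}
    (C : Fin m → Fin 3 → Fin n) (hC : ∀ j, Function.Injective (C j)) :
    (∃ M : Finset (Res10 n m × Hos10 n m), (oneInThreeInstance C).IsStronglyStable M) ↔
    (∃ a : Fin n → Bool, ∀ j : Fin m, ∃! ℓ : Fin 3, a (C j ℓ) = true) := by
  constructor
  · rintro ⟨M, hS⟩
    refine ⟨fun i => decide ((Res10.y i, Hos10.x i) ∈ M), fun j => ?_⟩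
    simpa using OneInThree.existsUnique_matched_literal hS (hC j)
  · rintro ⟨a, ha⟩
    exact ⟨_, OneInThree.isStronglyStable_assignmentMatching ha⟩
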